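/- Let k be a field, A the path algebra of the Kronecker quiver (vertices x, y; arrows α, β : x → y), and M ∈ GL_2(k). Let σ_M be the algebra automorphism of A fixing the vertex idempotents and acting on arrows by (σ(α), σ(β))^T = M·(α, β)^T. Then σ_M is an inner automorphism of A if and only if M is a scalar matrix. Consequently, M ↦ [σ_M] induces an injective group homomorphism PGL_2(k) → Out(A). -/

import Mathlib

lemma kron_core {k A : Type*} [Field k] [Ring A] [Algebra k A]
    (ex ey aa ab : A)
    (hxx : ex * ex = ex) (hyy : ey * ey = ey)
    (hxy : ex * ey = 0) (hyx : ey * ex = 0) (hsum : ex + ey = 1)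
    (hax : ex * aa = aa) (hay : aa * ey = aa)
    (hbx : ex * ab = ab) (hby : ab * ey = ab)
    (hya : ey * aa = 0) (hae : aa * ex = 0)
    (hyb : ey * ab = 0) (hbe : ab * ex = 0)
    (haa : aa * aa = 0) (hab2 : aa * ab = 0) (hba : ab * aa = 0) (hbb : ab * ab = 0)
    (bas : Module.Basis (Fin 4) k A) (hbas : ⇑bas = ![ex, ey, aa, ab])
    (P Q : Matrix (Fin 2) (Fin 2) k)
    (σ τ : A ≃ₐ[k] A)
    (hσx : σ ex = ex)
    (hσa : σ aa = P 0 0 • aa + P 0 1 • ab) (hσb : σ ab = P 1 0 • aa + P 1 1 • ab)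
    (hτx : τ ex = ex)
    (hτa : τ aa = Q 0 0 • aa + Q 0 1 • ab) (hτb : τ ab = Q 1 0 • aa + Q 1 1 • ab) :
    (∃ u : Aˣ, ∀ z : A, σ z = (u : A) * τ z * (↑u⁻¹ : A)) ↔
      ∃ c : kˣ, P = (c : k) • Q := by
  have hey1 : ey = 1 - ex := by rw [← hsum]; abel
  have hσy : σ ey = ey := by rw [hey1, map_sub, map_one, hσx]
  have hτy : τ ey = ey := by rw [hey1, map_sub, map_one, hτx]
  have hind : ∀ p q r s : k, p•ex+q•ey+r•aa+s•ab = 0 → p = 0 ∧ q = 0 ∧ r = 0 ∧ s = 0 := by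
    intro p q r s h
    have h2 : ∀ i, ![p,q,r,s] i = 0 := by
      refine Fintype.linearIndependent_iff.mp bas.linearIndependent ![p,q,r,s] ?_
      simp only [hbas, Fin.sum_univ_four]
      simpa using h
    exact ⟨h2 0, h2 1, h2 2, h2 3⟩
  have heq : ∀ p q r s p' q' r' s' : k,
      p•ex+q•ey+r•aa+s•ab = p'•ex+q'•ey+r'•aa+s'•ab →
      p = p' ∧ q = q' ∧ r = r' ∧ s = s' := by
    intro p q r s p' q' r' s' h
    have h0 : (p-p')•ex+(q-q')•ey+(r-r')•aa+(s-s')•ab = 0 := by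
      have h1 : (p•ex+q•ey+r•aa+s•ab) - (p'•ex+q'•ey+r'•aa+s'•ab) = 0 := sub_eq_zero.mpr h
      rw [← h1]; module
    obtain ⟨h1, h2, h3, h4⟩ := hind _ _ _ _ h0
    exact ⟨sub_eq_zero.mp h1, sub_eq_zero.mp h2, sub_eq_zero.mp h3, sub_eq_zero.mp h4⟩
  constructor
  · rintro ⟨u, hu⟩
    set a := bas.repr (↑u:A) 0 with ha
    set b := bas.repr (↑u:A) 1 with hb
    set c := bas.repr (↑u:A) 2 with hc
    set d := bas.repr (↑u:A) 3 with hd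
    set a' := bas.repr (↑u⁻¹:A) 0 with ha'
    set b' := bas.repr (↑u⁻¹:A) 1 with hb'
    set c' := bas.repr (↑u⁻¹:A) 2 with hc'
    set d' := bas.repr (↑u⁻¹:A) 3 with hd'
    have hurep : (↑u:A) = a•ex + b•ey + c•aa + d•ab := by
      have h := (bas.sum_repr (↑u:A)).symm
      rw [Fin.sum_univ_four] at h
      simpa [hbas] using h
    have hvrep : (↑u⁻¹:A) = a'•ex + b'•ey + c'•aa + d'•ab := by
      have h := (bas.sum_repr (↑u⁻¹:A)).symm
      rw [Fin.sum_univ_four] at h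
      simpa [hbas] using h
    -- from z = ex : ex * u = u * ex
    have hex := hu ex
    rw [hσx, hτx] at hex
    have h1 : ex * (↑u:A) = (↑u:A) * ex := by
      have h1 := congrArg (· * (↑u:A)) hex
      rw [mul_assoc ((↑u:A) * ex), Units.inv_mul, mul_one] at h1
      exact h1
    have h2 : a•ex + (0:k)•ey + c•aa + d•ab = a•ex + (0:k)•ey + (0:k)•aa + (0:k)•ab := by
      calc a•ex + (0:k)•ey + c•aa + d•ab = ex * (a•ex + b•ey + c•aa + d•ab) := by
            simp [mul_add, mul_smul_comm, hxx, hxy, hax, hbx]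
        _ = (a•ex + b•ey + c•aa + d•ab) * ex := by rw [← hurep]; exact h1
        _ = a•ex + (0:k)•ey + (0:k)•aa + (0:k)•ab := by
            simp [add_mul, smul_mul_assoc, hxx, hyx, hae, hbe]
    obtain ⟨-, -, hc0, hd0⟩ := heq _ _ _ _ _ _ _ _ h2
    -- from u * u⁻¹ = 1
    have h3 : (a*a')•ex + (b*b')•ey + (a*c')•aa + (a*d')•ab
        = (1:k)•ex + (1:k)•ey + (0:k)•aa + (0:k)•ab := by
      calc (a*a')•ex + (b*b')•ey + (a*c')•aa + (a*d')•ab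
          = (a•ex + b•ey + c•aa + d•ab) * (a'•ex + b'•ey + c'•aa + d'•ab) := by
            rw [hc0, hd0]
            simp [mul_add, add_mul, smul_mul_assoc, mul_smul_comm, smul_smul,
              hxx, hxy, hyx, hyy, hax, hay, hbx, hby, hya, hae, hyb, hbe]
            module
        _ = (↑u:A) * (↑u⁻¹:A) := by rw [← hurep, ← hvrep]
        _ = 1 := u.mul_inv
        _ = (1:k)•ex + (1:k)•ey + (0:k)•aa + (0:k)•ab := by
            rw [← hsum]; simp
    obtain ⟨haa', hbb', -, -⟩ := heq _ _ _ _ _ _ _ _ h3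
    -- from z = aa and z = ab
    have harow : ∀ (w : A) (p0 p1 q0 q1 : k), σ w = p0 • aa + p1 • ab →
        τ w = q0 • aa + q1 • ab → p0 = a*b'*q0 ∧ p1 = a*b'*q1 := by
      intro w p0 p1 q0 q1 hσw hτw
      have h4 : (0:k)•ex + (0:k)•ey + p0•aa + p1•ab
          = (0:k)•ex + (0:k)•ey + (a*b'*q0)•aa + (a*b'*q1)•ab := by
        calc (0:k)•ex + (0:k)•ey + p0•aa + p1•ab = σ w := by rw [hσw]; simp
          _ = (↑u:A) * τ w * (↑u⁻¹:A) := hu w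
          _ = (0:k)•ex + (0:k)•ey + (a*b'*q0)•aa + (a*b'*q1)•ab := by
              rw [hτw, hurep, hvrep, hc0, hd0]
              simp only [mul_add, add_mul, smul_mul_assoc, mul_smul_comm, smul_smul,
                smul_zero, zero_mul, mul_zero, zero_smul, zero_add, add_zero,
                hxx, hxy, hyx, hyy, hax, hay, hbx, hby, hya, hae, hyb, hbe,
                haa, hab2, hba, hbb]
              module
      obtain ⟨-, -, h5, h6⟩ := heq _ _ _ _ _ _ _ _ h4
      exact ⟨h5, h6⟩
    obtain ⟨e00, e01⟩ := harow aa (P 0 0) (P 0 1) (Q 0 0) (Q 0 1) hσa hτa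
    obtain ⟨e10, e11⟩ := harow ab (P 1 0) (P 1 1) (Q 1 0) (Q 1 1) hσb hτb
    refine ⟨⟨a*b', a'*b, by linear_combination b*b'*haa' + hbb',
      by linear_combination a*a'*hbb' + haa'⟩, ?_⟩
    ext i j
    fin_cases i <;> fin_cases j <;>
      simp only [Matrix.smul_apply, smul_eq_mul, Units.val_mk] <;>
      [exact e00; exact e01; exact e10; exact e11]
  · rintro ⟨c, hP⟩
    have hvw : ((c:k)•ex + ey) * (((c⁻¹:kˣ):k)•ex + ey) = 1 := by
      have : (c:k) * ((c⁻¹:kˣ):k) = 1 := by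
        rw [← Units.val_mul, mul_inv_cancel, Units.val_one]
      simp [mul_add, add_mul, smul_mul_assoc, mul_smul_comm, smul_smul,
        hxx, hxy, hyx, hyy, this, hsum]
    have hwv : (((c⁻¹:kˣ):k)•ex + ey) * ((c:k)•ex + ey) = 1 := by
      have : ((c⁻¹:kˣ):k) * (c:k) = 1 := by
        rw [← Units.val_mul, inv_mul_cancel, Units.val_one]
      simp [mul_add, add_mul, smul_mul_assoc, mul_smul_comm, smul_smul,
        hxx, hxy, hyx, hyy, this, hsum]
    refine ⟨⟨(c:k)•ex + ey, ((c⁻¹:kˣ):k)•ex + ey, hvw, hwv⟩, ?_⟩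
    have hl : σ.toLinearMap = (LinearMap.mulRight k (((c⁻¹:kˣ):k)•ex + ey)).comp
        ((LinearMap.mulLeft k ((c:k)•ex + ey)).comp τ.toLinearMap) := by
      refine bas.ext fun i => ?_
      have hcc : (c:k) * ((c⁻¹:kˣ):k) = 1 := by
        rw [← Units.val_mul, mul_inv_cancel, Units.val_one]
      simp only [hbas]
      fin_cases i <;>
        simp [LinearMap.mulLeft_apply, LinearMap.mulRight_apply,
          hσx, hσy, hσa, hσb, hτx, hτy, hτa, hτb, hP, Matrix.smul_apply, smul_eq_mul,
          mul_add, add_mul, smul_mul_assoc, mul_smul_comm, smul_smul, hcc,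
          hxx, hxy, hyx, hyy, hax, hay, hbx, hby, hya, hae, hyb, hbe,
          haa, hab2, hba, hbb] <;> module
    intro z
    have hz := LinearMap.congr_fun hl z
    simpa [mul_assoc] using hz

/-- Let `A` be the Kronecker path algebra (abstracted as a `k`-algebra with basis
`e_x, e_y, α, β` satisfying the Kronecker relations) and `M ∈ GL₂(k)`. The automorphism
`σ_M` fixing the vertex idempotents and acting on the arrows by `M` is inner iff `M` is
scalar; consequently `M ↦ [σ_M]` gives an injective homomorphism `PGL₂(k) → Out(A)`
(two such automorphisms differ by an inner one iff the matrices are proportional). -/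
theorem kronecker_arrow_automorphism_inner_iff_scalar
    {k A : Type*} [Field k] [Ring A] [Algebra k A]
    (ex ey aa ab : A)
    (hxx : ex * ex = ex) (hyy : ey * ey = ey)
    (hxy : ex * ey = 0) (hyx : ey * ex = 0) (hsum : ex + ey = 1)
    (hax : ex * aa = aa) (hay : aa * ey = aa)
    (hbx : ex * ab = ab) (hby : ab * ey = ab)
    (bas : Module.Basis (Fin 4) k A) (hbas : ⇑bas = ![ex, ey, aa, ab])
    (M N : Matrix.GeneralLinearGroup (Fin 2) k)
    (σM σN : A ≃ₐ[k] A)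
    (hMx : σM ex = ex) (hMy : σM ey = ey)
    (hMa : σM aa = ((M : Matrix (Fin 2) (Fin 2) k) 0 0) • aa
      + ((M : Matrix (Fin 2) (Fin 2) k) 0 1) • ab)
    (hMb : σM ab = ((M : Matrix (Fin 2) (Fin 2) k) 1 0) • aa
      + ((M : Matrix (Fin 2) (Fin 2) k) 1 1) • ab)
    (hNx : σN ex = ex) (hNy : σN ey = ey)
    (hNa : σN aa = ((N : Matrix (Fin 2) (Fin 2) k) 0 0) • aa
      + ((N : Matrix (Fin 2) (Fin 2) k) 0 1) • ab)
    (hNb : σN ab = ((N : Matrix (Fin 2) (Fin 2) k) 1 0) • aa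
      + ((N : Matrix (Fin 2) (Fin 2) k) 1 1) • ab) :
    ((∃ u : Aˣ, ∀ z : A, σM z = (u : A) * z * (↑u⁻¹ : A)) ↔
      ∃ c : kˣ, (M : Matrix (Fin 2) (Fin 2) k) = (c : k) • (1 : Matrix (Fin 2) (Fin 2) k)) ∧
    ((∃ u : Aˣ, ∀ z : A, σM z = (u : A) * σN z * (↑u⁻¹ : A)) ↔
      ∃ c : kˣ, (M : Matrix (Fin 2) (Fin 2) k) = (c : k) • (N : Matrix (Fin 2) (Fin 2) k)) := by
  have hya : ey * aa = 0 := by rw [← hax, ← mul_assoc, hyx, zero_mul]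
  have hae : aa * ex = 0 := by rw [← hay, mul_assoc, hyx, mul_zero]
  have hyb : ey * ab = 0 := by rw [← hbx, ← mul_assoc, hyx, zero_mul]
  have hbe : ab * ex = 0 := by rw [← hby, mul_assoc, hyx, mul_zero]
  have haa : aa * aa = 0 := by
    nth_rewrite 1 [← hay]; rw [mul_assoc, hya, mul_zero]
  have hab2 : aa * ab = 0 := by
    nth_rewrite 1 [← hay]; rw [mul_assoc, hyb, mul_zero]
  have hba : ab * aa = 0 := by
    nth_rewrite 1 [← hby]; rw [mul_assoc, hya, mul_zero]
  have hbb : ab * ab = 0 := by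
    nth_rewrite 1 [← hby]; rw [mul_assoc, hyb, mul_zero]
  constructor
  · exact kron_core ex ey aa ab hxx hyy hxy hyx hsum hax hay hbx hby hya hae hyb hbe
      haa hab2 hba hbb bas hbas (M : Matrix (Fin 2) (Fin 2) k) 1 σM (AlgEquiv.refl)
      hMx hMa hMb rfl (by simp [Matrix.one_apply]) (by simp [Matrix.one_apply])
  · exact kron_core ex ey aa ab hxx hyy hxy hyx hsum hax hay hbx hby hya hae hyb hbe
      haa hab2 hba hbb bas hbas (M : Matrix (Fin 2) (Fin 2) k)
      (N : Matrix (Fin 2) (Fin 2) k) σM σN hMx hMa hMb hNx hNa hNb
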